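/- arXiv:2009.09874 — 2 statements merged into one kernel-verified Lean document; each statement's English description precedes it below -/
import Mathlib

section
/- Let ν be a Borel probability measure on ℝ and let z ∈ ℂ with Im z ≠ 0. Define K : ℝ² → ℂ by K(x,y) = (1/(z−x)² − 1/(z−y)²)/(x−y) for x ≠ y and K(x,x) = 2/(z−x)³. Then (1/2) ∬_{ℝ²} (x+y) K(x,y) ν(dx) ν(dy) = − ∫ 1/(z−x)² ν(dx) − (∫ 1/(z−x) ν(dx))² + 2z (∫ 1/(z−x) ν(dx)) (∫ 1/(z−x)² ν(dx)). -/
/-!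
With `u x = 1 / (z - x)`, a partial-fraction computation gives, on and off the diagonal,
`(x + y) K(x, y) = 2z (u(x)² u(y) + u(x) u(y)²) - (u(x)² + u(y)²) - 2 u(x) u(y)`.
Each term is a symmetrised product `f(x) g(y) + g(x) f(y)`, whose integral against `ν ⊗ ν` is
`2 (∫ f dν) (∫ g dν)` by Fubini; the bound `|u| ≤ 1 / |Im z|` makes everything integrable.
-/

open MeasureTheory

def symmTensor {α R : Type*} [Add R] [Mul R] (f g : α → R) (p : α × α) : R :=
  f p.1 * g p.2 + g p.1 * f p.2

section SymmTensor

variable {α 𝕜 : Type*} [MeasurableSpace α] [RCLike 𝕜] {μ : Measure α} {f g : α → 𝕜}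

theorem integrable_symmTensor (hf : Integrable f μ) (hg : Integrable g μ) :
    Integrable (symmTensor f g) (μ.prod μ) :=
  (hf.mul_prod hg).add (hg.mul_prod hf)

theorem integral_symmTensor [SFinite μ] (hf : Integrable f μ) (hg : Integrable g μ) :
    ∫ p, symmTensor f g p ∂(μ.prod μ) = 2 * ((∫ x, f x ∂μ) * ∫ x, g x ∂μ) := by
  simp only [symmTensor]
  rw [integral_add (hf.mul_prod hg) (hg.mul_prod hf), integral_prod_mul, integral_prod_mul]
  ring

end SymmTensor

section CauchyKernel

variable {z : ℂ}

theorem Complex.sub_ofReal_ne_zero_of_im_ne_zero (hz : z.im ≠ 0) (x : ℝ) : z - x ≠ 0 := by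
  intro h
  apply hz
  simpa using congrArg Complex.im h

theorem Complex.norm_one_div_sub_ofReal_le (hz : z.im ≠ 0) (x : ℝ) :
    ‖1 / (z - x)‖ ≤ 1 / |z.im| := by
  rw [norm_div, norm_one]
  exact one_div_le_one_div_of_le (abs_pos.mpr hz) (by simpa using Complex.abs_im_le_norm (z - x))

theorem integrable_one_div_sub_ofReal_pow (μ : Measure ℝ) [IsFiniteMeasure μ] (hz : z.im ≠ 0)
    (n : ℕ) : Integrable (fun x : ℝ => 1 / (z - x) ^ n) μ := by
  have hcont : Continuous fun x : ℝ => 1 / (z - x) ^ n :=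
    continuous_const.div (by fun_prop) fun x =>
      pow_ne_zero n (Complex.sub_ofReal_ne_zero_of_im_ne_zero hz x)
  refine Integrable.of_bound hcont.aestronglyMeasurable ((1 / |z.im|) ^ n) (ae_of_all _ fun x => ?_)
  rw [← one_div_pow, norm_pow]
  exact pow_le_pow_left₀ (norm_nonneg _) (Complex.norm_one_div_sub_ofReal_le hz x) n

end CauchyKernel

section DividedDifference

variable {𝕜 : Type*} [Field 𝕜] {z x y : 𝕜}

theorem add_mul_divided_difference_one_div_sq (hx : z - x ≠ 0) (hy : z - y ≠ 0)
    (hxy : x - y ≠ 0) :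
    (x + y) * ((1 / (z - x) ^ 2 - 1 / (z - y) ^ 2) / (x - y))
      = 2 * z * symmTensor (fun v => 1 / (z - v) ^ 2) (fun v => 1 / (z - v)) (x, y)
        - symmTensor (fun v => 1 / (z - v) ^ 2) (fun _ => 1) (x, y)
        - symmTensor (fun v => 1 / (z - v)) (fun v => 1 / (z - v)) (x, y) := by
  simp only [symmTensor]
  field_simp
  ring

theorem add_self_mul_two_div_cube (hx : z - x ≠ 0) :
    (x + x) * (2 / (z - x) ^ 3)
      = 2 * z * symmTensor (fun v => 1 / (z - v) ^ 2) (fun v => 1 / (z - v)) (x, x)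
        - symmTensor (fun v => 1 / (z - v) ^ 2) (fun _ => 1) (x, x)
        - symmTensor (fun v => 1 / (z - v)) (fun v => 1 / (z - v)) (x, x) := by
  simp only [symmTensor]
  field_simp
  ring

end DividedDifference

/-- the symmetrized interaction kernel coming from `f(v) = 1/(z-v)`
integrates against `ν ⊗ ν` to an expression in the Cauchy–Stieltjes transform of `ν`. -/
theorem kernel_double_integral_identity
    (ν : Measure ℝ) [IsProbabilityMeasure ν] (z : ℂ) (hz : z.im ≠ 0)
    (K : ℝ → ℝ → ℂ)
    (hK : ∀ x y : ℝ, K x y =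
      if x = y then 2 / (z - (x : ℂ)) ^ 3
      else (1 / (z - (x : ℂ)) ^ 2 - 1 / (z - (y : ℂ)) ^ 2) / ((x : ℂ) - (y : ℂ))) :
    (1 / 2 : ℂ) * ∫ p : ℝ × ℝ, ((p.1 : ℂ) + (p.2 : ℂ)) * K p.1 p.2 ∂(ν.prod ν)
      = - (∫ x : ℝ, 1 / (z - (x : ℂ)) ^ 2 ∂ν)
        - (∫ x : ℝ, 1 / (z - (x : ℂ)) ∂ν) ^ 2
        + 2 * z * (∫ x : ℝ, 1 / (z - (x : ℂ)) ∂ν) * (∫ x : ℝ, 1 / (z - (x : ℂ)) ^ 2 ∂ν) := by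
  set u : ℝ → ℂ := fun x => 1 / (z - x)
  set u2 : ℝ → ℂ := fun x => 1 / (z - x) ^ 2
  have hu : Integrable u ν := by
    simpa only [pow_one] using integrable_one_div_sub_ofReal_pow ν hz 1
  have hu2 : Integrable u2 ν := integrable_one_div_sub_ofReal_pow ν hz 2
  have h1 : Integrable (fun _ : ℝ => (1 : ℂ)) ν := integrable_const 1
  have hpoint : (fun p : ℝ × ℝ => ((p.1 : ℂ) + p.2) * K p.1 p.2)
      = fun p => 2 * z * symmTensor u2 u p - symmTensor u2 (fun _ => 1) p - symmTensor u u p := by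
    funext ⟨x, y⟩
    dsimp only
    have hx := Complex.sub_ofReal_ne_zero_of_im_ne_zero hz x
    rw [hK]
    split_ifs with hxy
    · subst hxy
      exact add_self_mul_two_div_cube hx
    · exact add_mul_divided_difference_one_div_sq hx
        (Complex.sub_ofReal_ne_zero_of_im_ne_zero hz y) (sub_ne_zero.mpr (mod_cast hxy))
  have hu2u := (integrable_symmTensor hu2 hu).const_mul (2 * z)
  have hu21 := integrable_symmTensor hu2 h1
  rw [hpoint, integral_sub ?_ (integrable_symmTensor hu hu), integral_sub hu2u hu21, integral_const_mul,
    integral_symmTensor hu2 hu, integral_symmTensor hu2 h1, integral_symmTensor hu hu]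
  · simp only [integral_const, probReal_univ, one_smul]
    ring
  · exact hu2u.sub hu21
end

section
/- Let β₁, β₂, κ > 0, γ > 0, α ∈ (0,1], and let (ν_t)_{t≥0} be a measurable family of Borel probability measures on ℝ supported in [0,∞) satisfying the mean-field Wishart evolution equation. Assume each ν_t has finite first moment m_t¹ = ∫ x ν_t(dx) and that t ↦ m_t¹ is continuous. Then for every t ≥ 0: m_t¹ = β₁κ²/(2γ) + (m₀¹ − β₁κ²/(2γ)) e^{−2γt}. -/
/-!
Testing the evolution equation with `f x = x` kills the interaction term (`f'` is constant, so
the difference quotient and `f''` vanish), and the drift integrates to `β₁κ² - 2γ m_s` against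
a probability measure. Thus the first moment `m` satisfies `m t = m 0 + ∫₀ᵗ (β₁κ² - 2γ m s) ds`;
by continuity of `m` this is the linear ODE `m' = β₁κ² - 2γ m`, whose solution is unique since
the vector field is Lipschitz, and the explicit relaxation to `β₁κ²/(2γ)` solves it.
-/

open MeasureTheory

/-- Kernel `(f'(x) - f'(y))/(x - y)` with the convention `f''(x)` on the diagonal. -/
noncomputable def wKernel (f : ℝ → ℝ) (x y : ℝ) : ℝ :=
  if x = y then deriv (deriv f) x else (deriv f x - deriv f y) / (x - y)

/-- The mean-field Wishart evolution equation: for every twice continuously differentiable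
test function for which all the integrals below converge absolutely, and every `t ≥ 0`,
the weak integro-differential equation holds. -/
def MeanFieldWishart (β₁ β₂ κ γ α : ℝ) (ν : ℝ → Measure ℝ) : Prop :=
  ∀ f : ℝ → ℝ, ContDiff ℝ 2 f →
    (∀ s : ℝ, 0 ≤ s →
      Integrable f (ν s) ∧
      Integrable (fun x => (β₁ * κ ^ 2 - 2 * γ * x) * deriv f x) (ν s) ∧
      Integrable (fun p : ℝ × ℝ => (p.1 + p.2) * wKernel f p.1 p.2) ((ν s).prod (ν s))) →
    (∀ t : ℝ, 0 ≤ t →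
      IntegrableOn (fun s => ∫ x, (β₁ * κ ^ 2 - 2 * γ * x) * deriv f x ∂(ν s)) (Set.Ioc 0 t) ∧
      IntegrableOn (fun s => ∫ x, ∫ y, (x + y) * wKernel f x y ∂(ν s) ∂(ν s)) (Set.Ioc 0 t)) →
    ∀ t : ℝ, 0 ≤ t →
      ∫ x, f x ∂(ν t) = ∫ x, f x ∂(ν 0)
        + ∫ s in Set.Ioc (0:ℝ) t, ∫ x, (β₁ * κ ^ 2 - 2 * γ * x) * deriv f x ∂(ν s)
        + (α * β₁ * β₂ * κ ^ 2 / 2) *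
            ∫ s in Set.Ioc (0:ℝ) t, ∫ x, ∫ y, (x + y) * wKernel f x y ∂(ν s) ∂(ν s)

open Set

theorem wKernel_id (x y : ℝ) : wKernel (fun x => x) x y = 0 := by
  unfold wKernel
  split_ifs <;> simp

theorem integral_drift_id {μ : Measure ℝ} [IsProbabilityMeasure μ] (b a : ℝ)
    (hμ : Integrable (fun x : ℝ => x) μ) :
    ∫ x, (b - a * x) * deriv (fun x : ℝ => x) x ∂μ = b - a * ∫ x, x ∂μ := by
  simp only [deriv_id'', mul_one]
  rw [integral_sub (integrable_const b) (hμ.const_mul a), integral_const, integral_const_mul]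
  simp

theorem ContinuousOn.hasDerivWithinAt_integral_Ici {ψ : ℝ → ℝ} {a s : ℝ}
    (hψ : ContinuousOn ψ (Ici a)) (hs : a ≤ s) :
    HasDerivWithinAt (fun u => ∫ x in a..u, ψ x) (ψ s) (Ici s) s := by
  have hIoi : Ioi s ⊆ Ici a := fun x hx => hs.trans (le_of_lt hx)
  refine intervalIntegral.integral_hasDerivWithinAt_right ?_ ?_ ((hψ s hs).mono hIoi)
  · exact (hψ.mono (uIcc_of_le hs ▸ Icc_subset_Ici_self)).intervalIntegrable
  · exact ⟨Ici a, Filter.mem_of_superset self_mem_nhdsWithin hIoi,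
      hψ.aestronglyMeasurable measurableSet_Ici⟩

theorem hasDerivAt_relaxation (a c y₀ t : ℝ) (ha : a ≠ 0) :
    HasDerivAt (fun t => c / a + (y₀ - c / a) * Real.exp (-(a * t)))
      (c - a * (c / a + (y₀ - c / a) * Real.exp (-(a * t)))) t := by
  have hexp : HasDerivAt (fun t => Real.exp (-(a * t))) (Real.exp (-(a * t)) * -a) t := by
    simpa using (((hasDerivAt_id t).const_mul a).neg).exp
  refine ((hexp.const_mul (y₀ - c / a)).const_add (c / a)).congr_deriv ?_
  field_simp
  ring

theorem eq_relaxation_of_integral_eq {g : ℝ → ℝ} {a c : ℝ} (ha : a ≠ 0)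
    (hg : ContinuousOn g (Ici 0))
    (hint : ∀ t, 0 ≤ t → g t = g 0 + ∫ s in (0:ℝ)..t, (c - a * g s)) {t : ℝ} (ht : 0 ≤ t) :
    g t = c / a + (g 0 - c / a) * Real.exp (-(a * t)) := by
  have hlip : LipschitzWith ‖a‖₊ (fun x : ℝ => c - a * x) := by
    simpa using (LipschitzWith.const c).sub (lipschitzWith_smul a)
  have hg' : ∀ s ∈ Ico (0:ℝ) t, HasDerivWithinAt g (c - a * g s) (Ici s) s := fun s hs =>
    (((continuousOn_const.sub (continuousOn_const.mul hg)).hasDerivWithinAt_integral_Ici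
      hs.1).const_add (g 0)).congr (fun u hu => hint u (hs.1.trans hu)) (hint s hs.1)
  refine ODE_solution_unique (fun _ => hlip) (hg.mono Icc_subset_Ici_self) hg'
    (Continuous.continuousOn (by fun_prop))
    (fun s _ => (hasDerivAt_relaxation a c (g 0) s ha).hasDerivWithinAt) (by simp)
    ⟨ht, le_rfl⟩

theorem MeanFieldWishart.firstMoment_eq {β₁ β₂ κ γ α : ℝ} {ν : ℝ → Measure ℝ}
    (hMF : MeanFieldWishart β₁ β₂ κ γ α ν) [∀ t, IsProbabilityMeasure (ν t)]
    (hint : ∀ t, Integrable (fun x : ℝ => x) (ν t))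
    (hcont : ContinuousOn (fun t => ∫ x, x ∂(ν t)) (Ici 0)) {t : ℝ} (ht : 0 ≤ t) :
    ∫ x, x ∂(ν t) = ∫ x, x ∂(ν 0)
      + ∫ s in (0:ℝ)..t, (β₁ * κ ^ 2 - 2 * γ * ∫ x, x ∂(ν s)) := by
  have hdrift (s : ℝ) : ∫ x, (β₁ * κ ^ 2 - 2 * γ * x) * deriv (fun x : ℝ => x) x ∂(ν s)
      = β₁ * κ ^ 2 - 2 * γ * ∫ x, x ∂(ν s) :=
    integral_drift_id _ _ (hint s)
  have h := hMF (fun x => x) contDiff_id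
    (fun s _ => ⟨hint s,
      by
        simp only [deriv_id'', mul_one]
        exact (integrable_const _).sub ((hint s).const_mul _),
      by simp [wKernel_id]⟩)
    (fun t _ => ⟨by
      simp only [hdrift]
      exact (continuousOn_const.sub (continuousOn_const.mul
        (hcont.mono Icc_subset_Ici_self))).integrableOn_Icc.mono_set Ioc_subset_Icc_self,
      by simp [wKernel_id]⟩) t ht
  simpa only [hdrift, wKernel_id, mul_zero, integral_zero, add_zero,
    intervalIntegral.integral_of_le ht] using h

theorem wishart_first_moment_general
    (β₁ β₂ κ γ α : ℝ) (hγ : 0 < γ)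
    (ν : ℝ → Measure ℝ) (hprob : ∀ t : ℝ, IsProbabilityMeasure (ν t))
    (hMF : MeanFieldWishart β₁ β₂ κ γ α ν)
    (hint : ∀ t : ℝ, Integrable (fun x : ℝ => x) (ν t))
    (hcont : ContinuousOn (fun t : ℝ => ∫ x, x ∂(ν t)) (Set.Ici 0)) :
    ∀ t : ℝ, 0 ≤ t →
      ∫ x, x ∂(ν t)
        = β₁ * κ ^ 2 / (2 * γ)
          + ((∫ x, x ∂(ν 0)) - β₁ * κ ^ 2 / (2 * γ)) * Real.exp (-(2 * γ * t)) :=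
  fun _ ht => eq_relaxation_of_integral_eq (by positivity) hcont
    (fun _ hs => hMF.firstMoment_eq hint hcont hs) ht

/-- explicit evolution of the first moment of the mean-field Wishart flow. -/
theorem wishart_first_moment
    (β₁ β₂ κ γ α : ℝ) (hβ₁ : 0 < β₁) (hβ₂ : 0 < β₂) (hκ : 0 < κ) (hγ : 0 < γ)
    (hα : α ∈ Set.Ioc (0:ℝ) 1)
    (ν : ℝ → Measure ℝ) (hprob : ∀ t : ℝ, IsProbabilityMeasure (ν t))
    (hsupp : ∀ t : ℝ, ν t (Set.Iio 0) = 0)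
    (hMF : MeanFieldWishart β₁ β₂ κ γ α ν)
    (hint : ∀ t : ℝ, Integrable (fun x : ℝ => x) (ν t))
    (hcont : ContinuousOn (fun t : ℝ => ∫ x, x ∂(ν t)) (Set.Ici 0)) :
    ∀ t : ℝ, 0 ≤ t →
      ∫ x, x ∂(ν t)
        = β₁ * κ ^ 2 / (2 * γ)
          + ((∫ x, x ∂(ν 0)) - β₁ * κ ^ 2 / (2 * γ)) * Real.exp (-(2 * γ * t)) :=
  wishart_first_moment_general β₁ β₂ κ γ α hγ ν hprob hMF hint hcont
end
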